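/- arXiv:1809.03988 — 3 statements merged into one kernel-verified Lean document; each statement's English description precedes it below -/
import Mathlib

section
/- Let λ_1, ..., λ_N be distinct nonzero elements of F_q and let G be the N × (N-B) Vandermonde matrix with entries G_{i,j} = λ_i^{j-1}, for 0 ≤ B < N. Let Bmat be any N × B matrix whose columns are distinct standard basis vectors of F_q^N. Then the N × N matrix [G | Bmat] is invertible. -/
/-!
A kernel vector `(a, b)` of `[G | Bmat]` gives, at each of the `N - B` rows `i` not hit by a
standard basis column, `∑ⱼ aⱼ λᵢ^j = 0`: a polynomial of degree `< N - B` with `N - B`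
distinct roots, so `a = 0`. The row of the `j`-th standard basis column then reads `bⱼ = 0`.
-/

open Matrix Function

namespace Matrix

variable {m n₁ n₂ R : Type*}

theorem eq_zero_of_forall_mem_sum_pow_mul_eq_zero [CommRing R] [IsDomain R] {n : ℕ}
    {v : m → R} {s : Finset m} (hv : Set.InjOn v s) (hn : n ≤ s.card) {a : Fin n → R}
    (ha : ∀ i ∈ s, ∑ j : Fin n, v i ^ (j : ℕ) * a j = 0) : a = 0 := by
  let f : Fin n → m := fun k => s.equivFin.symm (Fin.castLE hn k)
  have hf : Injective (v ∘ f) := fun k l hkl =>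
    Fin.castLE_injective hn <| s.equivFin.symm.injective <| Subtype.val_injective <|
      hv (s.equivFin.symm _).2 (s.equivFin.symm _).2 hkl
  exact eq_zero_of_forall_index_sum_pow_mul_eq_zero hf fun k => ha _ (s.equivFin.symm _).2

theorem one_submatrix_mulVec [Semiring R] [Fintype n₂] [DecidableEq m] {inj : n₂ → m}
    (hinj : Injective inj) (b : n₂ → R) :
    (1 : Matrix m m R).submatrix id inj *ᵥ b = extend inj b 0 := by
  ext i
  simp only [mulVec, dotProduct, submatrix_apply, id, one_apply, ite_mul, one_mul, zero_mul]
  by_cases hi : ∃ j, inj j = i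
  · obtain ⟨j, rfl⟩ := hi
    rw [hinj.extend_apply, Fintype.sum_eq_single j fun k hk => if_neg (hinj.ne hk.symm),
      if_pos rfl]
  · rw [extend_apply' _ _ _ hi]
    exact Finset.sum_eq_zero fun j _ => if_neg fun h => hi ⟨j, h.symm⟩

theorem eq_zero_of_fromCols_one_submatrix_mulVec_eq_zero [Semiring R] [Fintype n₁] [Fintype n₂]
    [DecidableEq m] (A : Matrix m n₁ R) {inj : n₂ → m} (hinj : Injective inj)
    (hA : ∀ a, (∀ i ∉ Set.range inj, (A *ᵥ a) i = 0) → a = 0) {x : n₁ ⊕ n₂ → R}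
    (hx : fromCols A ((1 : Matrix m m R).submatrix id inj) *ᵥ x = 0) : x = 0 := by
  rw [fromCols_mulVec, one_submatrix_mulVec hinj] at hx
  have hl : x ∘ Sum.inl = 0 := hA _ fun i hi => by
    simpa [extend_apply' _ _ _ hi] using congrFun hx i
  have hr : x ∘ Sum.inr = 0 := funext fun j => by
    simpa [hl, hinj.extend_apply] using congrFun hx (inj j)
  ext (j | j)
  · exact congrFun hl j
  · exact congrFun hr j

end Matrix

theorem stmt2_general {F : Type*} [Field F]
    (N B : ℕ) (hB : B < N)
    (lam : Fin N → F) (hinj : Function.Injective lam)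
    (inj : Fin B → Fin N) (hBinj : Function.Injective inj) :
    IsUnit (Matrix.det (fun i j : Fin N =>
      Sum.elim (fun j' : Fin (N - B) => lam i ^ (j' : ℕ))
               (fun j' : Fin B => if i = inj j' then (1 : F) else 0)
        (finSumFinEquiv.symm (finCongr (Nat.sub_add_cancel hB.le).symm j)))) := by
  set e : Fin N ≃ Fin (N - B) ⊕ Fin B :=
    (finCongr (Nat.sub_add_cancel hB.le).symm).trans finSumFinEquiv.symm
  set G : Matrix (Fin N) (Fin (N - B)) F := of fun i j => lam i ^ (j : ℕ)
  have hG : ∀ a, (∀ i ∉ Set.range inj, (G *ᵥ a) i = 0) → a = 0 := fun a ha =>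
    eq_zero_of_forall_mem_sum_pow_mul_eq_zero (s := (Finset.univ.image inj)ᶜ) hinj.injOn
      (by simp [Finset.card_compl, Finset.card_image_of_injective _ hBinj])
      fun i hi => ha i (by simpa using hi)
  show IsUnit (det ((fromCols G ((1 : Matrix (Fin N) (Fin N) F).submatrix id inj)).submatrix id e))
  rw [isUnit_iff_ne_zero, Ne, ← exists_mulVec_eq_zero_iff]
  rintro ⟨x, hx0, hx⟩
  rw [submatrix_mulVec_equiv] at hx
  have hxe := eq_zero_of_fromCols_one_submatrix_mulVec_eq_zero G hBinj hG hx
  exact hx0 (funext fun i => by simpa using congrFun hxe (e i))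

/-- Let `λ₁, …, λ_N` be distinct nonzero elements of `F_q` (with
`q > N`) and `G` the `N × (N-B)` Vandermonde matrix `G i j = λᵢ^j` (`0 ≤ B < N`).
Let `Bmat` be an `N × B` matrix whose columns are distinct standard basis vectors
of `F_q^N`. Then the `N × N` matrix `[G | Bmat]` is invertible. -/
theorem stmt2 {F : Type*} [Field F] [Fintype F] [DecidableEq F]
    (N B : ℕ) (hB : B < N) (hq : N < Fintype.card F)
    (lam : Fin N → F) (hinj : Function.Injective lam) (hnz : ∀ i, lam i ≠ 0)
    (inj : Fin B → Fin N) (hBinj : Function.Injective inj) :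
    IsUnit (Matrix.det (fun i j : Fin N =>
      Sum.elim (fun j' : Fin (N - B) => lam i ^ (j' : ℕ))
               (fun j' : Fin B => if i = inj j' then (1 : F) else 0)
        (finSumFinEquiv.symm (finCongr (Nat.sub_add_cancel hB.le).symm j)))) :=
  stmt2_general N B hB lam hinj inj hBinj
end

section
/- Let A_1, ..., A_M, Q, W be finite random variables. Suppose for every T-subset S of [1:M] we have H(W) ≤ H(A_{[1:M]} | Q) - H(A_S | Q) + δ. Then H(W) ≤ ((M-T)/M)·H(A_{[1:M]} | Q) + δ. -/
open Finset

/-- Probability that a finite random variable `X` (on a finite outcome space with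
probability mass function `p`) takes the value `a`. -/
noncomputable def probOf {Ω : Type*} [Fintype Ω] {α : Type*} [Fintype α] [DecidableEq α]
    (p : Ω → ℝ) (X : Ω → α) (a : α) : ℝ :=
  ∑ ω ∈ univ.filter (fun ω => X ω = a), p ω

/-- Shannon entropy `H(X)` of a finite random variable. -/
noncomputable def entH {Ω : Type*} [Fintype Ω] {α : Type*} [Fintype α] [DecidableEq α]
    (p : Ω → ℝ) (X : Ω → α) : ℝ :=
  - ∑ a : α, probOf p X a * Real.log (probOf p X a)

/-- Conditional Shannon entropy `H(X | Y) = H(X, Y) - H(Y)`. -/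
noncomputable def condH {Ω : Type*} [Fintype Ω] {α β : Type*}
    [Fintype α] [DecidableEq α] [Fintype β] [DecidableEq β]
    (p : Ω → ℝ) (X : Ω → α) (Y : Ω → β) : ℝ :=
  entH p (fun ω => (X ω, Y ω)) - entH p Y

/-- Mutual information `I(X ; Y) = H(X) + H(Y) - H(X, Y)`. -/
noncomputable def mutI {Ω : Type*} [Fintype Ω] {α β : Type*}
    [Fintype α] [DecidableEq α] [Fintype β] [DecidableEq β]
    (p : Ω → ℝ) (X : Ω → α) (Y : Ω → β) : ℝ :=
  entH p X + entH p Y - entH p (fun ω => (X ω, Y ω))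

/-- Conditional mutual information `I(X ; Y | Z) = H(X|Z) + H(Y|Z) - H(X,Y|Z)`. -/
noncomputable def cmutI {Ω : Type*} [Fintype Ω] {α β γ : Type*}
    [Fintype α] [DecidableEq α] [Fintype β] [DecidableEq β] [Fintype γ] [DecidableEq γ]
    (p : Ω → ℝ) (X : Ω → α) (Y : Ω → β) (Z : Ω → γ) : ℝ :=
  condH p X Z + condH p Y Z - condH p (fun ω => (X ω, Y ω)) Z

/-- `p` is a probability mass function on the finite outcome space `Ω`. -/
def IsPMF {Ω : Type*} [Fintype Ω] (p : Ω → ℝ) : Prop :=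
  (∀ ω, 0 ≤ p ω) ∧ ∑ ω, p ω = 1

/-! Submodularity of entropy, `H(X,Y,Z) + H(Z) ≤ H(X,Z) + H(Y,Z)`, is Gibbs' inequality for the
law of `(X,Y,Z)` against `p(x,z) p(y,z) / p(z)`; hence `S ↦ H(A_S, Q)` is a submodular set function.
For a submodular `f` on the subsets of a finite linear order, write `f S - f ∅` as the sum of the
increments `f (S ∩ {≤ i}) - f (S ∩ {< i})` over `i ∈ S`; submodularity bounds each of them below by
the increment `f {≤ i} - f {< i}` of the full chain. Summing over all `T`-subsets, each `i` is
counted `C(M-1, T-1)` times, which is Han's inequality `T/M · (f [M] - f ∅) ≤ 𝔼_S (f S - f ∅)`.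
So some `T`-subset `S` has `H(A_S | Q) ≥ T/M · H(A | Q)`, and the hypothesis for this `S` gives
the claim. -/

open scoped BigOperators

section Entropy

variable {Ω α β γ : Type*} [Fintype Ω] [Fintype α] [DecidableEq α] [Fintype β] [DecidableEq β]
  [Fintype γ] [DecidableEq γ] {p : Ω → ℝ}

theorem sum_probOf_mul (X : Ω → α) (φ : α → ℝ) :
    ∑ a, probOf p X a * φ a = ∑ ω, p ω * φ (X ω) := by
  simp_rw [probOf, Finset.sum_mul]
  rw [← Finset.sum_fiberwise univ X fun ω => p ω * φ (X ω)]
  refine Finset.sum_congr rfl fun a _ => Finset.sum_congr rfl fun ω hω => ?_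
  rw [(Finset.mem_filter.1 hω).2]

theorem entH_eq_neg_sum (X : Ω → α) :
    entH p X = -∑ ω, p ω * Real.log (probOf p X (X ω)) := by
  rw [entH, sum_probOf_mul X fun a => Real.log (probOf p X a)]

theorem entH_congr_of_eq_iff {X : Ω → α} {Y : Ω → β}
    (h : ∀ ω ω', X ω' = X ω ↔ Y ω' = Y ω) : entH p X = entH p Y := by
  simp only [entH_eq_neg_sum, probOf, h]

theorem probOf_nonneg (hp : ∀ ω, 0 ≤ p ω) (X : Ω → α) (a : α) : 0 ≤ probOf p X a :=
  Finset.sum_nonneg fun ω _ => hp ω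

theorem probOf_le_probOf (hp : ∀ ω, 0 ≤ p ω) {X : Ω → α} {Y : Ω → β} {a : α} {b : β}
    (h : ∀ ω, X ω = a → Y ω = b) : probOf p X a ≤ probOf p Y b :=
  Finset.sum_le_sum_of_subset_of_nonneg (Finset.monotone_filter_right _ fun ω _ => h ω)
    fun ω _ _ => hp ω

theorem sum_probOf (X : Ω → α) : ∑ a, probOf p X a = ∑ ω, p ω := by
  simpa using sum_probOf_mul (p := p) X fun _ => 1

theorem sum_probOf_pair_left (X : Ω → α) (Y : Ω → β) (b : β) :
    ∑ a, probOf p (fun ω => (X ω, Y ω)) (a, b) = probOf p Y b := by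
  simp_rw [probOf, Prod.ext_iff, and_comm (a := X _ = _), ← Finset.filter_filter]
  exact Finset.sum_fiberwise _ X p

theorem sum_probOf_mul_probOf_div (X : Ω → α) (Y : Ω → β) (Z : Ω → γ) :
    ∑ z, ∑ x, ∑ y, probOf p (fun ω => (X ω, Z ω)) (x, z) * probOf p (fun ω => (Y ω, Z ω)) (y, z)
      / probOf p Z z = ∑ ω, p ω := by
  simp_rw [← Finset.sum_div, ← Finset.sum_mul_sum, sum_probOf_pair_left, mul_self_div_self]
  exact sum_probOf Z

theorem sub_le_mul_log_sub_log {r q : ℝ} (hr : 0 ≤ r) (hq : 0 < q) :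
    r - q ≤ r * (Real.log r - Real.log q) := by
  rcases hr.eq_or_lt with rfl | hr
  · simpa using hq.le
  have hlog := Real.log_le_sub_one_of_pos (div_pos hq hr)
  rw [Real.log_div hq.ne' hr.ne'] at hlog
  have hmul := mul_le_mul_of_nonneg_left hlog hr.le
  have hcancel : r * (q / r - 1) = q - r := by field_simp
  linarith

theorem entH_add_entH_le (hp : ∀ ω, 0 ≤ p ω) (X : Ω → α) (Y : Ω → β) (Z : Ω → γ) :
    entH p (fun ω => ((X ω, Y ω), Z ω)) + entH p Z ≤
      entH p (fun ω => (X ω, Z ω)) + entH p (fun ω => (Y ω, Z ω)) := by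
  set V : Ω → (α × β) × γ := fun ω => ((X ω, Y ω), Z ω)
  set r : (α × β) × γ → ℝ := probOf p V
  set pxz : (α × β) × γ → ℝ := fun v => probOf p (fun ω => (X ω, Z ω)) (v.1.1, v.2)
  set pyz : (α × β) × γ → ℝ := fun v => probOf p (fun ω => (Y ω, Z ω)) (v.1.2, v.2)
  set pz : (α × β) × γ → ℝ := fun v => probOf p Z v.2
  have hZ : entH p Z = -∑ v, r v * Real.log (pz v) := by rw [sum_probOf_mul, entH_eq_neg_sum]
  have hXZ : entH p (fun ω => (X ω, Z ω)) = -∑ v, r v * Real.log (pxz v) := by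
    rw [sum_probOf_mul, entH_eq_neg_sum]
  have hYZ : entH p (fun ω => (Y ω, Z ω)) = -∑ v, r v * Real.log (pyz v) := by
    rw [sum_probOf_mul, entH_eq_neg_sum]
  have gibbs : ∀ v, r v - pxz v * pyz v / pz v ≤
      r v * (Real.log (r v) + Real.log (pz v) - Real.log (pxz v) - Real.log (pyz v)) := by
    intro v
    rcases (probOf_nonneg hp V v : 0 ≤ r v).eq_or_lt with hr | hr
    · rw [show r v = 0 from hr.symm]
      simpa using div_nonneg (mul_nonneg (probOf_nonneg hp _ _) (probOf_nonneg hp _ _))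
        (probOf_nonneg hp _ _)
    have hxz : 0 < pxz v := hr.trans_le <| probOf_le_probOf hp fun ω h => by simp [V, ← h]
    have hyz : 0 < pyz v := hr.trans_le <| probOf_le_probOf hp fun ω h => by simp [V, ← h]
    have hz : 0 < pz v := hr.trans_le <| probOf_le_probOf hp fun ω h => by simp [V, ← h]
    have h := sub_le_mul_log_sub_log hr.le (div_pos (mul_pos hxz hyz) hz)
    rw [Real.log_div (mul_pos hxz hyz).ne' hz.ne', Real.log_mul hxz.ne' hyz.ne'] at h
    linarith
  have hq : ∑ v, pxz v * pyz v / pz v = ∑ ω, p ω := by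
    rw [Fintype.sum_prod_type_right]
    simp only [Fintype.sum_prod_type, pxz, pyz, pz]
    exact sum_probOf_mul_probOf_div X Y Z
  have hsum := Finset.sum_le_sum (s := univ) fun v _ => gibbs v
  have hr : ∑ v, r v = ∑ ω, p ω := sum_probOf V
  simp only [Finset.sum_sub_distrib, mul_add, mul_sub, Finset.sum_add_distrib, hq, hr] at hsum
  have hV : entH p V = -∑ v, r v * Real.log (r v) := rfl
  rw [hV, hZ, hXZ, hYZ]
  linarith

end Entropy

section Han

variable {ι : Type*}

def IsSubmodular [DecidableEq ι] (f : Finset ι → ℝ) : Prop :=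
  ∀ s t, f (s ∪ t) + f (s ∩ t) ≤ f s + f t

theorem Finset.sum_sum_powersetCard [DecidableEq ι] {M : Type*} [AddCommMonoid M]
    (s : Finset ι) {k : ℕ} (hk : 1 ≤ k) (g : ι → M) :
    ∑ S ∈ s.powersetCard k, ∑ i ∈ S, g i = (#s - 1).choose (k - 1) • ∑ i ∈ s, g i := by
  rw [Finset.sum_comm' (t' := s) (s' := fun i => {S ∈ s.powersetCard k | {i} ⊆ S}), smul_sum]
  · refine sum_congr rfl fun i hi => ?_
    rw [sum_const, card_filter_powersetCard_subset {i} s k (by simpa) (by simpa), card_singleton]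
  · intro S i
    simp only [mem_filter, mem_powersetCard, singleton_subset_iff]
    exact ⟨fun h => ⟨h, h.1.1 h.2⟩, And.left⟩

variable [LinearOrder ι]

theorem sum_filter_le_sub_filter_lt (f : Finset ι → ℝ) (S : Finset ι) :
    ∑ i ∈ S, (f {j ∈ S | j ≤ i} - f {j ∈ S | j < i}) = f S - f ∅ := by
  induction S using Finset.induction_on_max with
  | empty => simp
  | insert a S hlt ih =>
    have ha : a ∉ S := fun h => lt_irrefl a (hlt a h)
    have hle : {j ∈ insert a S | j ≤ a} = insert a S :=
      filter_true_of_mem fun j hj => (mem_insert.1 hj).elim le_of_eq fun h => (hlt j h).le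
    have hlt' : {j ∈ insert a S | j < a} = S := by
      rw [filter_insert, if_neg (lt_irrefl a), filter_true_of_mem hlt]
    have hrest : ∀ i ∈ S, f {j ∈ insert a S | j ≤ i} - f {j ∈ insert a S | j < i} =
        f {j ∈ S | j ≤ i} - f {j ∈ S | j < i} := fun i hi => by
      rw [filter_insert, filter_insert, if_neg (hlt i hi).not_ge, if_neg (hlt i hi).asymm]
    rw [sum_insert ha, hle, hlt', sum_congr rfl hrest, ih]
    ring

variable [Fintype ι] {f : Finset ι → ℝ}

theorem IsSubmodular.sub_le_sub_filter (hf : IsSubmodular f) {S : Finset ι} {i : ι} (hi : i ∈ S) :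
    f {j | j ≤ i} - f {j | j < i} ≤ f {j ∈ S | j ≤ i} - f {j ∈ S | j < i} := by
  have hunion : {j ∈ S | j ≤ i} ∪ ({j | j < i} : Finset ι) = ({j | j ≤ i} : Finset ι) := by
    ext j
    simp only [mem_union, mem_filter, mem_univ, true_and]
    constructor
    · rintro (⟨-, h⟩ | h)
      exacts [h, h.le]
    · intro h
      rcases h.eq_or_lt with rfl | h
      exacts [Or.inl ⟨hi, le_rfl⟩, Or.inr h]
  have hinter : {j ∈ S | j ≤ i} ∩ ({j | j < i} : Finset ι) = {j ∈ S | j < i} := by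
    ext j
    simp only [mem_inter, mem_filter, mem_univ, true_and]
    exact ⟨fun h => ⟨h.1.1, h.2⟩, fun h => ⟨⟨h.1, h.2.le⟩, h.2⟩⟩
  have := hf {j ∈ S | j ≤ i} {j | j < i}
  rw [hunion, hinter] at this
  linarith

theorem IsSubmodular.mul_sub_le_sum_powersetCard (hf : IsSubmodular f) {k : ℕ} (hk : 1 ≤ k) :
    (Fintype.card ι - 1).choose (k - 1) * (f univ - f ∅) ≤
      ∑ S ∈ powersetCard k univ, (f S - f ∅) := by
  rw [← sum_filter_le_sub_filter_lt f univ, ← nsmul_eq_mul, ← card_univ,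
    ← sum_sum_powersetCard univ hk]
  refine sum_le_sum fun S _ => ?_
  rw [← sum_filter_le_sub_filter_lt f S]
  exact sum_le_sum fun i hi => hf.sub_le_sub_filter hi

theorem IsSubmodular.han_inequality (hf : IsSubmodular f) {k : ℕ} (hk : k ≤ Fintype.card ι) :
    k / Fintype.card ι * (f univ - f ∅) ≤ 𝔼 S ∈ powersetCard k univ, (f S - f ∅) := by
  set n := Fintype.card ι
  rcases Nat.eq_zero_or_pos k with rfl | hk0
  · simp
  have hchoose : (n : ℝ) * (n - 1).choose (k - 1) = n.choose k * k := by
    have h := Nat.add_one_mul_choose_eq (n - 1) (k - 1)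
    rw [Nat.sub_add_cancel (hk0.trans_le hk), Nat.sub_add_cancel hk0] at h
    exact_mod_cast h
  have hn : (0 : ℝ) < n := by exact_mod_cast hk0.trans_le hk
  have hC : (0 : ℝ) < n.choose k := by exact_mod_cast Nat.choose_pos hk
  rw [expect_eq_sum_div_card, card_powersetCard, card_univ, le_div_iff₀ hC]
  calc k / n * (f univ - f ∅) * n.choose k = (n - 1).choose (k - 1) * (f univ - f ∅) := by
        field_simp
        linear_combination -(f univ - f ∅) * hchoose
    _ ≤ _ := hf.mul_sub_le_sum_powersetCard hk0

end Han

section Subfamily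

variable {Ω α β ι : Type*} [Fintype Ω] [Fintype α] [DecidableEq α] [Fintype β] [DecidableEq β]
  [DecidableEq ι] {p : Ω → ℝ}

noncomputable def subfamilyEntH (p : Ω → ℝ) (A : ι → Ω → α) (Q : Ω → β) (S : Finset ι) : ℝ :=
  entH p fun ω => ((fun i : {i // i ∈ S} => A i.1 ω), Q ω)

theorem isSubmodular_subfamilyEntH (hp : ∀ ω, 0 ≤ p ω) (A : ι → Ω → α) (Q : Ω → β) :
    IsSubmodular (subfamilyEntH p A Q) := by
  intro s t
  have h := entH_add_entH_le hp (fun ω (i : {i // i ∈ s}) => A i.1 ω)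
    (fun ω (i : {i // i ∈ t}) => A i.1 ω) (fun ω => ((fun i : {i // i ∈ s ∩ t} => A i.1 ω), Q ω))
  convert h using 2 <;> refine entH_congr_of_eq_iff fun ω ω' => ?_ <;>
    simp only [Prod.ext_iff, funext_iff, Subtype.forall, mem_union, mem_inter] <;> aesop

theorem subfamilyEntH_empty (A : ι → Ω → α) (Q : Ω → β) :
    subfamilyEntH p A Q ∅ = entH p Q :=
  entH_congr_of_eq_iff fun ω ω' => by simp [Prod.ext_iff, funext_iff]

theorem condH_subtype_eq_sub (A : ι → Ω → α) (Q : Ω → β) (S : Finset ι) :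
    condH p (fun ω (i : {i // i ∈ S}) => A i.1 ω) Q =
      subfamilyEntH p A Q S - subfamilyEntH p A Q ∅ := by
  rw [subfamilyEntH_empty]
  rfl

theorem condH_eq_sub_subfamilyEntH [Fintype ι] (A : ι → Ω → α) (Q : Ω → β) :
    condH p (fun ω i => A i ω) Q = subfamilyEntH p A Q univ - subfamilyEntH p A Q ∅ := by
  rw [subfamilyEntH_empty, condH, subfamilyEntH]
  congr 1
  exact entH_congr_of_eq_iff fun ω ω' => by simp [Prod.ext_iff, funext_iff]

end Subfamily

theorem stmt9_general {Ω : Type*} [Fintype Ω]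
    {α β γ : Type*} [Fintype α] [DecidableEq α] [Fintype β] [DecidableEq β]
    [Fintype γ] [DecidableEq γ]
    (p : Ω → ℝ) (hp : IsPMF p)
    (M : ℕ) (A : Fin M → Ω → α) (Q : Ω → β) (W : Ω → γ)
    (T : ℕ) (hTM : T ≤ M)
    (δ : ℝ)
    (h : ∀ S ∈ (Finset.univ : Finset (Fin M)).powersetCard T,
      entH p W ≤ condH p (fun ω => fun i => A i ω) Q -
        condH p (fun ω => fun i : {i // i ∈ S} => A i.1 ω) Q + δ) :
    entH p W ≤ (((M : ℝ) - T) / (M : ℝ)) * condH p (fun ω => fun i => A i ω) Q + δ := by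
  set f := subfamilyEntH p A Q
  have hP : (powersetCard T (univ : Finset (Fin M))).Nonempty := powersetCard_nonempty.2 (by simpa)
  obtain ⟨S, hS, hfS⟩ := exists_le_of_le_expect hP <|
    (isSubmodular_subfamilyEntH hp.1 A Q).han_inequality (by simpa using hTM)
  have hW := h S hS
  rw [condH_eq_sub_subfamilyEntH, condH_subtype_eq_sub] at hW
  rw [Fintype.card_fin] at hfS
  have hfrac : ((M : ℝ) - T) / M * (f univ - f ∅) = f univ - f ∅ - T / M * (f univ - f ∅) := by
    rcases Nat.eq_zero_or_pos M with rfl | hM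
    · simp
    · field_simp
  rw [condH_eq_sub_subfamilyEntH, hfrac]
  linarith

/-- If for every `T`-subset `S` of `[1:M]` we have
`H(W) ≤ H(A_{[1:M]} | Q) - H(A_S | Q) + δ`, then
`H(W) ≤ ((M-T)/M) · H(A_{[1:M]} | Q) + δ` (by averaging and Han's inequality). -/
theorem stmt9 {Ω : Type*} [Fintype Ω]
    {α β γ : Type*} [Fintype α] [DecidableEq α] [Fintype β] [DecidableEq β]
    [Fintype γ] [DecidableEq γ]
    (p : Ω → ℝ) (hp : IsPMF p)
    (M : ℕ) (A : Fin M → Ω → α) (Q : Ω → β) (W : Ω → γ)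
    (T : ℕ) (hT : 1 ≤ T) (hTM : T ≤ M)
    (δ : ℝ) (hδ : 0 ≤ δ)
    (h : ∀ S ∈ (Finset.univ : Finset (Fin M)).powersetCard T,
      entH p W ≤ condH p (fun ω => fun i => A i ω) Q -
        condH p (fun ω => fun i : {i // i ∈ S} => A i.1 ω) Q + δ) :
    entH p W ≤ (((M : ℝ) - T) / (M : ℝ)) * condH p (fun ω => fun i => A i ω) Q + δ :=
  stmt9_general p hp M A Q W T hTM δ h
end

section
/- Let W be uniform on F_q^L, Q a random variable independent of W, and A_1, ..., A_N finite random variables with equal entropies H(A_n | Q) = h for all n. If H(W) ≤ ((N-B-T)/(N-B))·H(A_{[1:N]\setminus\mathcal{B}} | Q) + o(L) for some B-subset 𝓑, then R = L / (Σ_n H(A_n)) satisfies limsup_{L→∞} R ≤ 1 - (B+T)/N. -/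
open Filter Topology

/-! Subadditivity and `H(Aₙ) ≥ H(Aₙ | Q)` turn the hypothesis into
`L - o(L) ≤ (N - B - T) · H(Aₙ)`, i.e. `R · (1 - o(1)) ≤ (N - B - T) / N`;
the `o(1)` factor disappears in the limsup. -/

theorem limsup_le_of_mul_one_sub_le {α : Type*} {l : Filter α} [l.NeBot] {f u : α → ℝ} {c : ℝ}
    (hu : Tendsto u l (𝓝 0)) (hf : ∀ᶠ x in l, 0 ≤ f x)
    (hfc : ∀ᶠ x in l, f x * (1 - u x) ≤ c) : limsup f l ≤ c := by
  have hbound : Tendsto (fun x => c / (1 - u x)) l (𝓝 c) := by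
    simpa only [sub_zero, div_one, Pi.div_def] using
      tendsto_const_nhds.div (hu.const_sub 1) (by norm_num : (1 : ℝ) - 0 ≠ 0)
  have hle : ∀ᶠ x in l, f x ≤ c / (1 - u x) := by
    filter_upwards [hu.eventually (eventually_lt_nhds one_pos), hfc] with x hux hx
    rwa [le_div_iff₀ (by linarith)]
  calc limsup f l ≤ limsup (fun x => c / (1 - u x)) l :=
        limsup_le_limsup hle (isCoboundedUnder_le_of_eventually_le l hf) hbound.isBoundedUnder_le
    _ = c := hbound.limsup_eq

theorem rate_nonneg_and_mul_one_sub_le {L e a k n : ℝ} (hk : 0 < k) (hn : 0 < n) (he : e < L)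
    (hL : 0 < L) (hLa : L - e ≤ k * a) :
    0 ≤ L / (n * a) ∧ L / (n * a) * (1 - e / L) ≤ k / n := by
  have ha : 0 < a := pos_of_mul_pos_right (by linarith) hk.le
  refine ⟨by positivity, ?_⟩
  rw [div_mul_eq_mul_div, div_le_div_iff₀ (by positivity) hn, one_sub_div hL.ne']
  calc L * ((L - e) / L) * n = (L - e) * n := by field_simp
    _ ≤ k * a * n := by gcongr
    _ = k * (n * a) := by ring

theorem stmt12_general (N B T : ℕ) (hN : B + T < N)
    (wH h aH hAS err : ℕ → ℝ)
    (hw : ∀ L, wH L = L)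
    (hsub : ∀ L, hAS L ≤ ((N : ℝ) - B) * h L)
    (hge : ∀ L, h L ≤ aH L)
    (main : ∀ L, wH L ≤ (((N : ℝ) - B - T) / ((N : ℝ) - B)) * hAS L + err L)
    (herr : Tendsto (fun L : ℕ => err L / L) atTop (nhds 0)) :
    Filter.limsup (fun L : ℕ => (L : ℝ) / ((N : ℝ) * aH L)) atTop
      ≤ 1 - ((B : ℝ) + T) / N := by
  have hBTN : (B : ℝ) + T < N := by exact_mod_cast hN
  have hNpos : (0 : ℝ) < N := by
    linarith [(B.cast_nonneg : (0 : ℝ) ≤ B), (T.cast_nonneg : (0 : ℝ) ≤ T)]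
  have hk : (0 : ℝ) < N - B - T := by linarith
  have hNB : (0 : ℝ) < N - B := by linarith [(T.cast_nonneg : (0 : ℝ) ≤ T)]
  have hlen : ∀ L : ℕ, (L : ℝ) - err L ≤ (N - B - T) * aH L := fun L => by
    have hscaled : ((N : ℝ) - B - T) / (N - B) * hAS L ≤ (N - B - T) * h L := by
      calc ((N : ℝ) - B - T) / (N - B) * hAS L ≤ (N - B - T) / (N - B) * ((N - B) * h L) := by
            gcongr; exact hsub L
        _ = (N - B - T) * h L := by field_simp
    linarith [main L, hw L, mul_le_mul_of_nonneg_left (hge L) hk.le]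
  have hrate : ∀ᶠ L : ℕ in atTop, 0 ≤ (L : ℝ) / (N * aH L) ∧
      (L : ℝ) / (N * aH L) * (1 - err L / L) ≤ (N - B - T) / N := by
    filter_upwards [herr.eventually (eventually_lt_nhds one_pos), eventually_gt_atTop 0]
      with L hsmall hL
    have hL : (0 : ℝ) < L := by exact_mod_cast hL
    exact rate_nonneg_and_mul_one_sub_le hk hNpos ((div_lt_one hL).mp hsmall) hL (hlen L)
  calc limsup (fun L : ℕ => (L : ℝ) / (N * aH L)) atTop ≤ (N - B - T) / N :=
        limsup_le_of_mul_one_sub_le herr (hrate.mono fun _ => And.left)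
          (hrate.mono fun _ => And.right)
    _ = 1 - ((B : ℝ) + T) / N := by field_simp; ring

/-- `W` is uniform on `F_q^L` (so `H(W) = L` in `q`-ary units), the
answers have equal entropies `H(A_n | Q) = h`, `H(A_{[1:N]∖𝓑} | Q) ≤ (N-B)·h` by
subadditivity, and `H(A_n) ≥ H(A_n | Q) = h`. If
`H(W) ≤ ((N-B-T)/(N-B)) · H(A_{[1:N]∖𝓑} | Q) + o(L)`, then the rate
`R = L / (Σₙ H(Aₙ)) = L / (N·H(Aₙ))` satisfies `limsup_{L→∞} R ≤ 1 - (B+T)/N`.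
The entropies of the sequence of schemes indexed by `L` are modeled by real
sequences: `wH L = H(W)`, `h L = H(A_n|Q)`, `aH L = H(A_n)`, `hAS L = H(A_{[1:N]∖𝓑}|Q)`. -/
theorem stmt12 (N B T : ℕ) (hN : B + T < N)
    (wH h aH hAS err : ℕ → ℝ)
    (hw : ∀ L, wH L = L)
    (hpos : ∀ L, 0 < h L)
    (hsub : ∀ L, hAS L ≤ ((N : ℝ) - B) * h L)
    (hge : ∀ L, h L ≤ aH L)
    (main : ∀ L, wH L ≤ (((N : ℝ) - B - T) / ((N : ℝ) - B)) * hAS L + err L)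
    (herr : Tendsto (fun L : ℕ => err L / L) atTop (nhds 0)) :
    Filter.limsup (fun L : ℕ => (L : ℝ) / ((N : ℝ) * aH L)) atTop
      ≤ 1 - ((B : ℝ) + T) / N :=
  stmt12_general N B T hN wH h aH hAS err hw hsub hge main herr
end
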